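/- Let ([p*],[u*]) be an optimal process for the pro-rata control problem with η∈[0,1) and γ>0. Then the absolute debt priority rule holds: for every node i∈{1,…,n} and every period t∈{0,…,T−1}, p*_i(t) = min( p̄*_i(t), w*_i(t) + c*_i(t) + Σ_{j≠i} a_{ji} p*_j(t) ), where w*, c*, p̄* are the net worths, total inflows, and residual liabilities generated by the optimal process. -/

import Mathlib

/-!
Feasibility alone gives `p*ᵢ(t) ≤ min (p̄*ᵢ(t), cashᵢ)`: the cash bound is `w*ᵢ(t+1) ≥ 0`, because
`aᵢᵢ = 0` for a node with debt, while a node without debt never pays.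

Conversely, suppose node `i` ends period `t` with both unpaid debt and positive net worth, and let
it pay `ε > 0` more. The extra money is passed on period by period: the new payment vector of each
period is a fixed point (Knaster–Tarski) of a monotone clearing map, in which every node pays its
old payment corrected by its changes of net worth and of receipts, clamped between what keeps its
residual debt below the old one and the residual debt itself. The invariant is that a node still in
debt has lost no more net worth than its extra repayments exceed its extra receipts; interest at
rate `α ≥ 1` preserves it, and it makes every clamped payment affordable. So the new process is
feasible with the same injections, never has larger residual liabilities, and costs at least
`(1 - η) ε` less, contradicting optimality.
-/

open Finset

noncomputable section

/-- The relative (pro-rata) liability matrix `A` built from the nominal liability matrix. -/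
def proRata {n : ℕ} (Pbar : Matrix (Fin n) (Fin n) ℝ) : Matrix (Fin n) (Fin n) ℝ :=
  fun i j =>
    if 0 < ∑ k, Pbar i k then Pbar i j / ∑ k, Pbar i k
    else if i = j then 1 else 0

/-- Residual liability vectors: `p̄(0) = p̄`, `p̄(t+1) = α (p̄(t) - p(t))`. -/
def resLiabVec {n : ℕ} (α : ℝ) (pbar : Fin n → ℝ)
    (p : ℕ → Fin n → ℝ) : ℕ → Fin n → ℝ
  | 0 => pbar
  | t + 1 => fun i => α * (resLiabVec α pbar p t i - p t i)

/-- Net worths: `w(0) = 0`, `w(t+1) = w(t) + c(t) + Aᵀ p(t) - p(t)`. -/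
def netWorthVec {n : ℕ} (A : Matrix (Fin n) (Fin n) ℝ)
    (c p : ℕ → Fin n → ℝ) : ℕ → Fin n → ℝ
  | 0 => fun _ => 0
  | t + 1 => fun i => netWorthVec A c p t i + c t i + (∑ j, A j i * p t j) - p t i

/-- Cumulative injected cash `B(t) = Σ_{k=0}^{t} 1ᵀ u(k)`. -/
def budget {n : ℕ} (u : ℕ → Fin n → ℝ) (t : ℕ) : ℝ :=
  ∑ k ∈ range (t + 1), ∑ i, u k i

/-- Feasibility of a process `([p],[u])` for the pro-rata control problem. -/
def FeasiblePro {n : ℕ} (T : ℕ) (α : ℝ) (pbar : Fin n → ℝ)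
    (A : Matrix (Fin n) (Fin n) ℝ) (e : ℕ → Fin n → ℝ) (F : ℕ → ℝ)
    (p u : ℕ → Fin n → ℝ) : Prop :=
  ∀ t, t < T →
    (∀ i, 0 ≤ p t i) ∧ (∀ i, 0 ≤ u t i) ∧
    (∀ i, p t i ≤ resLiabVec α pbar p t i) ∧
    (∀ i, 0 ≤ netWorthVec A (fun s i => e s i + u s i) p (t + 1) i) ∧
    budget u t ≤ F t

/-- Cost `J([p],[u])` of the pro-rata control problem. -/
def costPro {n : ℕ} (T : ℕ) (α η γ : ℝ) (pbar : Fin n → ℝ)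
    (p u : ℕ → Fin n → ℝ) : ℝ :=
  (1 - η) * ∑ t ∈ range T, ∑ i, (resLiabVec α pbar p t i - p t i)
    + η * ∑ i, resLiabVec α pbar p T i
    + γ * budget u (T - 1)

/-- Optimality for the pro-rata control problem. -/
def OptimalPro {n : ℕ} (T : ℕ) (α η γ : ℝ) (pbar : Fin n → ℝ)
    (A : Matrix (Fin n) (Fin n) ℝ) (e : ℕ → Fin n → ℝ) (F : ℕ → ℝ)
    (p u : ℕ → Fin n → ℝ) : Prop :=
  FeasiblePro T α pbar A e F p u ∧
  ∀ p' u', FeasiblePro T α pbar A e F p' u' →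
    costPro T α η γ pbar p u ≤ costPro T α η γ pbar p' u'


theorem Monotone.exists_isFixedPt {β : Type*} [ConditionallyCompleteLattice β] {f : β → β}
    (hf : Monotone f) {a b : β} (ha : a ≤ f a) (hb : ∀ x, f x ≤ b) :
    ∃ x, Function.IsFixedPt f x := by
  set S := {x | x ≤ f x}
  have hS : BddAbove S := ⟨b, fun x hx => hx.trans (hb x)⟩
  have hle : sSup S ≤ f (sSup S) :=
    csSup_le ⟨a, ha⟩ fun x hx => hx.trans (hf (le_csSup hS hx))
  exact ⟨sSup S, le_antisymm (le_csSup hS (hf hle)) hle⟩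

theorem Pi.single_le_of_nonneg {ι β : Type*} [DecidableEq ι] [Preorder β] [Zero β]
    {f : ι → β} {i : ι} {a : β} (hf : 0 ≤ f) (h : a ≤ f i) : Pi.single i a ≤ f := fun j => by
  rcases eq_or_ne j i with rfl | hj
  · simpa using h
  · simpa [hj] using hf j

theorem proRata_nonneg {n : ℕ} {Pbar : Matrix (Fin n) (Fin n) ℝ} (h : ∀ i j, 0 ≤ Pbar i j)
    (i j : Fin n) : 0 ≤ proRata Pbar i j := by
  unfold proRata
  split_ifs with hi
  exacts [div_nonneg (h i j) hi.le, zero_le_one, le_rfl]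

theorem proRata_self {n : ℕ} {Pbar : Matrix (Fin n) (Fin n) ℝ} {i : Fin n} (hP : Pbar i i = 0)
    (h : 0 < ∑ k, Pbar i k) : proRata Pbar i i = 0 := by
  simp [proRata, h, hP]

section Feasible

variable {n T : ℕ} {α : ℝ} {pbar : Fin n → ℝ} {e : ℕ → Fin n → ℝ} {F : ℕ → ℝ}
  {p u : ℕ → Fin n → ℝ}

theorem FeasiblePro.resLiabVec_eq_zero {A : Matrix (Fin n) (Fin n) ℝ} {i : Fin n}
    (hp : FeasiblePro T α pbar A e F p u) (h : pbar i = 0) :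
    ∀ s ≤ T, resLiabVec α pbar p s i = 0 := by
  intro s
  induction s with
  | zero => exact fun _ => h
  | succ s ih =>
    intro hs
    have hR := ih (by omega)
    have hpay := le_antisymm (hR ▸ (hp s hs).2.2.1 i) ((hp s hs).1 i)
    show α * (_ - _) = 0
    rw [hR, hpay, sub_zero, mul_zero]

theorem FeasiblePro.netWorthVec_succ_proRata {Pbar : Matrix (Fin n) (Fin n) ℝ} {t : ℕ}
    (hp : FeasiblePro T α pbar (proRata Pbar) e F p u) (hPbar : ∀ i j, 0 ≤ Pbar i j)
    (hPdiag : ∀ i, Pbar i i = 0) (hpbar : ∀ i, pbar i = ∑ j, Pbar i j) (ht : t < T)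
    (i : Fin n) :
    netWorthVec (proRata Pbar) (fun s i => e s i + u s i) p (t + 1) i
      = netWorthVec (proRata Pbar) (fun s i => e s i + u s i) p t i + (e t i + u t i)
        + ∑ j ∈ univ.erase i, proRata Pbar j i * p t j - p t i := by
  have hself : proRata Pbar i i * p t i = 0 := by
    rcases (sum_nonneg fun k _ => hPbar i k).eq_or_lt with h | h
    · have hR := hp.resLiabVec_eq_zero ((hpbar i).trans h.symm) t ht.le
      rw [le_antisymm (hR ▸ (hp t ht).2.2.1 i) ((hp t ht).1 i), mul_zero]
    · rw [proRata_self (hPdiag i) h, zero_mul]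
  dsimp only [netWorthVec]
  rw [← add_sum_erase _ _ (mem_univ i), hself, zero_add]

end Feasible

namespace ProRata

open Function Matrix

variable {n : ℕ} {A : Matrix (Fin n) (Fin n) ℝ}

theorem vecMul_nonneg (hA : ∀ k j, 0 ≤ A k j) {x : Fin n → ℝ} (hx : 0 ≤ x) : 0 ≤ x ᵥ* A :=
  fun j => show 0 ≤ ∑ k, x k * A k j from sum_nonneg fun k _ => mul_nonneg (hx k) (hA k j)

theorem vecMul_mono (hA : ∀ k j, 0 ≤ A k j) : Monotone (fun x : Fin n → ℝ => x ᵥ* A) :=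
  fun x y hxy => by simpa [sub_vecMul] using vecMul_nonneg hA (sub_nonneg.2 hxy)

/-- Compares a perturbed state `(r, w)` (residual liabilities, net worths) with a reference
state `(r', w')`: in `slack`, `(r' - r) j` is the extra debt node `j` has repaid and
`((r' - r) ᵥ* A) j` the extra repayments it has received, and a node still in debt has lost no
more net worth than the difference. -/
structure Dominates (A : Matrix (Fin n) (Fin n) ℝ) (r w r' w' : Fin n → ℝ) : Prop where
  res_nonneg : 0 ≤ r
  res_le : r ≤ r'
  netWorth_nonneg : 0 ≤ w
  slack : ∀ j, (r - r') j - ((r - r') ᵥ* A) j ≤ (w - w') j ∨ r j = 0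

/- Paying `payTarget` leaves a node's next net worth equal to the reference one
(`payTarget_sub_apply`). The clearing map clamps it below by `payFloor`, which keeps the residual
debt after payment at least `δ` below the reference one, and above by the residual debt. -/

def payFloor (r r' p δ : Fin n → ℝ) : Fin n → ℝ := 0 ⊔ (p + (r - r') + δ)

def payTarget (A : Matrix (Fin n) (Fin n) ℝ) (w w' p x : Fin n → ℝ) : Fin n → ℝ :=
  p + (w - w') + (x - p) ᵥ* A

def clearingMap (A : Matrix (Fin n) (Fin n) ℝ) (r r' w w' p δ x : Fin n → ℝ) : Fin n → ℝ :=
  payFloor r r' p δ ⊔ (payTarget A w w' p x ⊓ r)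

section Period

variable {r r' w w' p δ c x : Fin n → ℝ}

theorem payTarget_sub_apply (j : Fin n) :
    payTarget A w w' p x j - x j = (w + c + x ᵥ* A - x - (w' + c + p ᵥ* A - p)) j := by
  simp only [payTarget, sub_vecMul, Pi.add_apply, Pi.sub_apply]
  ring

theorem payFloor_le (hr : 0 ≤ r) (hδ : δ ≤ r' - p) : payFloor r r' p δ ≤ r :=
  sup_le hr fun j => by
    have := hδ j
    simp only [Pi.add_apply, Pi.sub_apply] at this ⊢
    linarith

theorem clearingMap_monotone (hA : ∀ k j, 0 ≤ A k j) :
    Monotone (clearingMap A r r' w w' p δ) :=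
  fun _ _ hxy => sup_le_sup_left (inf_le_inf_right _ (add_le_add_right
    (vecMul_mono hA (sub_le_sub_right hxy p)) _)) _

theorem exists_isFixedPt_clearingMap (hA : ∀ k j, 0 ≤ A k j) (hr : 0 ≤ r) (hδ : δ ≤ r' - p) :
    ∃ x, IsFixedPt (clearingMap A r r' w w' p δ) x :=
  Monotone.exists_isFixedPt (clearingMap_monotone hA) (a := payFloor r r' p δ) le_sup_left
    fun _ => sup_le (payFloor_le hr hδ) inf_le_right

theorem payFloor_le_of_isFixedPt (hx : IsFixedPt (clearingMap A r r' w w' p δ) x) :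
    payFloor r r' p δ ≤ x :=
  le_sup_left.trans_eq hx

theorem nonneg_of_isFixedPt (hx : IsFixedPt (clearingMap A r r' w w' p δ) x) : 0 ≤ x := fun j =>
  le_sup_left.trans (payFloor_le_of_isFixedPt hx j)

theorem add_le_of_isFixedPt (hx : IsFixedPt (clearingMap A r r' w w' p δ) x) (j : Fin n) :
    p j + (r j - r' j) + δ j ≤ x j :=
  le_sup_right.trans (payFloor_le_of_isFixedPt hx j)

theorem sub_le_of_isFixedPt (hx : IsFixedPt (clearingMap A r r' w w' p δ) x) :
    r - x ≤ r' - p - δ := fun j => by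
  have := add_le_of_isFixedPt hx j
  simp only [Pi.sub_apply]
  linarith

theorem le_of_isFixedPt (hx : IsFixedPt (clearingMap A r r' w w' p δ) x) (hr : 0 ≤ r)
    (hδ : δ ≤ r' - p) : x ≤ r :=
  hx.symm.le.trans (sup_le (payFloor_le hr hδ) inf_le_right)

theorem payTarget_le_of_isFixedPt (hx : IsFixedPt (clearingMap A r r' w w' p δ) x) {j : Fin n}
    (h : x j < r j) : payTarget A w w' p x j ≤ x j :=
  not_lt.1 fun ht => (lt_inf_iff.2 ⟨ht, h⟩).not_ge ((le_sup_right.trans_eq hx) j)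

theorem eq_payFloor_of_isFixedPt (hx : IsFixedPt (clearingMap A r r' w w' p δ) x) {j : Fin n}
    (h : payTarget A w w' p x j < x j) :
    x j = payFloor r r' p δ j :=
  le_antisymm (not_lt.1 fun hf => (sup_lt_iff.2 ⟨hf, inf_lt_of_left_lt h⟩).ne (congrFun hx j))
    (payFloor_le_of_isFixedPt hx j)

theorem Dominates.add_le_payTarget (h : Dominates A r w r' w') (hA : ∀ k j, 0 ≤ A k j)
    (hx : r - r' ≤ x - p) {j : Fin n} (hj : r j ≠ 0) :
    p j + (r j - r' j) ≤ payTarget A w w' p x j := by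
  have hs := (h.slack j).resolve_right hj
  have hm := vecMul_mono hA hx j
  simp only [payTarget, Pi.add_apply, Pi.sub_apply] at hs hm ⊢
  linarith

theorem Dominates.netWorth_next_nonneg (h : Dominates A r w r' w') (hA : ∀ k j, 0 ≤ A k j)
    (hc : 0 ≤ c) (hδ0 : 0 ≤ δ) (hδr : δ ≤ r' - p) (hδw : δ ≤ w' + c + p ᵥ* A - p)
    (hx : IsFixedPt (clearingMap A r r' w w' p δ) x) :
    0 ≤ w + c + x ᵥ* A - x := by
  intro j
  show (0 : ℝ) ≤ _
  have hδj : (0 : ℝ) ≤ δ j := hδ0 j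
  have hnext : (w + c + x ᵥ* A - x) j
      = (w' + c + p ᵥ* A - p) j + (payTarget A w w' p x j - x j) := by
    rw [payTarget_sub_apply (c := c)]
    simp only [Pi.sub_apply]
    ring
  rcases le_or_gt (x j) (payTarget A w w' p x j) with hle | hlt
  · linarith [hδw j]
  have hx_eq := eq_payFloor_of_isFixedPt hx hlt
  rcases le_or_gt (p j + (r j - r' j) + δ j) 0 with hneg | hpos
  · have hx0 : x j = 0 := hx_eq.trans (sup_eq_left.2 hneg)
    have hxA : (0 : ℝ) ≤ (x ᵥ* A) j := vecMul_nonneg hA (nonneg_of_isFixedPt hx) j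
    have hwj : (0 : ℝ) ≤ w j := h.netWorth_nonneg j
    have hcj : (0 : ℝ) ≤ c j := hc j
    simp only [Pi.add_apply, Pi.sub_apply]
    linarith
  · have hx_eq' : x j = p j + (r j - r' j) + δ j := hx_eq.trans (sup_eq_right.2 hpos.le)
    have hrj : r j ≠ 0 :=
      (hpos.trans_le (hx_eq'.symm.le.trans (le_of_isFixedPt hx h.res_nonneg hδr j))).ne'
    have hdx : r - r' ≤ x - p := fun k => by
      have := add_le_of_isFixedPt hx k
      have : (0 : ℝ) ≤ δ k := hδ0 k
      simp only [Pi.sub_apply]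
      linarith
    linarith [h.add_le_payTarget hA hdx hrj, hδw j]

theorem Dominates.slack_next {α : ℝ} (h : Dominates A r w r' w') (hα : 1 ≤ α)
    (hδr : δ ≤ r' - p) (hx : IsFixedPt (clearingMap A r r' w w' p δ) x) (j : Fin n) :
    (α • (r - x) - α • (r' - p)) j - ((α • (r - x) - α • (r' - p)) ᵥ* A) j
        ≤ (w + c + x ᵥ* A - x - (w' + c + p ᵥ* A - p)) j
      ∨ (α • (r - x)) j = 0 := by
  rcases (le_of_isFixedPt hx h.res_nonneg hδr j).lt_or_eq with hlt | heq
  · left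
    have hs := (h.slack j).resolve_right ((nonneg_of_isFixedPt hx j).trans_lt hlt).ne'
    have ht := payTarget_le_of_isFixedPt hx hlt
    set B := (r - r' - (x - p)) j - ((r - r' - (x - p)) ᵥ* A) j
    have hB : B ≤ payTarget A w w' p x j - x j := by
      simp only [B, payTarget, sub_vecMul, Pi.add_apply, Pi.sub_apply] at hs ⊢
      linarith
    calc _ = α * B := by
          rw [← smul_sub, show r - x - (r' - p) = r - r' - (x - p) by abel, smul_vecMul]
          simp only [B, Pi.smul_apply, smul_eq_mul]
          ring
      -- interest at rate `α ≥ 1` only widens the nonpositive gap `B`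
      _ ≤ B := by nlinarith
      _ ≤ _ := hB
      _ = _ := payTarget_sub_apply j
  · right
    simp [heq]

theorem Dominates.next {α : ℝ} (h : Dominates A r w r' w') (hA : ∀ k j, 0 ≤ A k j)
    (hα : 1 ≤ α) (hc : 0 ≤ c) (hδ0 : 0 ≤ δ) (hδr : δ ≤ r' - p)
    (hδw : δ ≤ w' + c + p ᵥ* A - p) (hx : IsFixedPt (clearingMap A r r' w w' p δ) x) :
    Dominates A (α • (r - x)) (w + c + x ᵥ* A - x) (α • (r' - p)) (w' + c + p ᵥ* A - p) where
  res_nonneg := smul_nonneg (by linarith) (sub_nonneg.2 (le_of_isFixedPt hx h.res_nonneg hδr))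
  res_le := smul_le_smul_of_nonneg_left
    ((sub_le_of_isFixedPt hx).trans (sub_le_self _ hδ0)) (by linarith)
  netWorth_nonneg := h.netWorth_next_nonneg hA hc hδ0 hδr hδw hx
  slack := h.slack_next hα hδr hx

end Period

section Evolution

variable {T : ℕ} {α : ℝ} {pbar : Fin n → ℝ} {c p q q' δ : ℕ → Fin n → ℝ} {s : ℕ}

theorem resLiabVec_succ :
    resLiabVec α pbar q (s + 1) = α • (resLiabVec α pbar q s - q s) :=
  rfl

theorem netWorthVec_succ :
    netWorthVec A c q (s + 1) = netWorthVec A c q s + c s + q s ᵥ* A - q s := by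
  ext i
  simp [netWorthVec, vecMul, dotProduct, mul_comm]

theorem resLiabVec_congr (h : ∀ k < s, q k = q' k) :
    resLiabVec α pbar q s = resLiabVec α pbar q' s := by
  induction s with
  | zero => rfl
  | succ s ih =>
    rw [resLiabVec_succ, resLiabVec_succ, ih fun k hk => h k (hk.trans s.lt_succ_self),
      h s s.lt_succ_self]

theorem netWorthVec_congr (h : ∀ k < s, q k = q' k) :
    netWorthVec A c q s = netWorthVec A c q' s := by
  induction s with
  | zero => rfl
  | succ s ih =>
    rw [netWorthVec_succ, netWorthVec_succ, ih fun k hk => h k (hk.trans s.lt_succ_self),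
      h s s.lt_succ_self]

theorem exists_dominating_process (hA : ∀ k j, 0 ≤ A k j) (hα : 1 ≤ α) (hpbar : 0 ≤ pbar)
    (hc : ∀ s < T, 0 ≤ c s) (hδ0 : ∀ s < T, 0 ≤ δ s)
    (hδr : ∀ s < T, δ s ≤ resLiabVec α pbar p s - p s)
    (hδw : ∀ s < T, δ s ≤ netWorthVec A c p (s + 1)) :
    ∃ q : ℕ → Fin n → ℝ,
      (∀ s < T, 0 ≤ q s ∧ q s ≤ resLiabVec α pbar q s ∧ 0 ≤ netWorthVec A c q (s + 1) ∧
        resLiabVec α pbar q s - q s ≤ resLiabVec α pbar p s - p s - δ s) ∧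
      resLiabVec α pbar q T ≤ resLiabVec α pbar p T := by
  suffices H : ∀ m ≤ T, ∃ q : ℕ → Fin n → ℝ,
      (∀ s < m, 0 ≤ q s ∧ q s ≤ resLiabVec α pbar q s ∧ 0 ≤ netWorthVec A c q (s + 1) ∧
        resLiabVec α pbar q s - q s ≤ resLiabVec α pbar p s - p s - δ s) ∧
      Dominates A (resLiabVec α pbar q m) (netWorthVec A c q m)
        (resLiabVec α pbar p m) (netWorthVec A c p m) by
    obtain ⟨q, hq, hdom⟩ := H T le_rfl
    exact ⟨q, hq, hdom.res_le⟩
  intro m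
  induction m with
  | zero => exact fun _ => ⟨p, fun s hs => absurd hs s.not_lt_zero,
      ⟨hpbar, le_rfl, le_rfl, fun j => Or.inl (by simp)⟩⟩
  | succ m ih =>
    intro hm
    obtain ⟨q, hq, hdom⟩ := ih (by omega)
    obtain ⟨x, hx⟩ := exists_isFixedPt_clearingMap (w := netWorthVec A c q m)
      (w' := netWorthVec A c p m) hA hdom.res_nonneg (hδr m hm)
    have hnext := hdom.next hA hα (hc m hm) (hδ0 m hm) (hδr m hm)
      (netWorthVec_succ (s := m) ▸ hδw m hm) hx
    have hR : ∀ s ≤ m, resLiabVec α pbar (update q m x) s = resLiabVec α pbar q s :=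
      fun s hs => resLiabVec_congr fun k hk => update_of_ne (by omega) _ _
    have hW : ∀ s ≤ m, netWorthVec A c (update q m x) s = netWorthVec A c q s :=
      fun s hs => netWorthVec_congr fun k hk => update_of_ne (by omega) _ _
    refine ⟨update q m x, fun s hs => ?_, ?_⟩
    · rcases (Nat.lt_succ_iff.1 hs).lt_or_eq with hs | rfl
      · rw [update_of_ne hs.ne, hR s hs.le, hW (s + 1) hs]
        exact hq s hs
      · rw [update_self, hR s le_rfl, netWorthVec_succ, hW s le_rfl, update_self]
        exact ⟨nonneg_of_isFixedPt hx, le_of_isFixedPt hx hdom.res_nonneg (hδr s hm),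
          hnext.netWorth_nonneg, sub_le_of_isFixedPt hx⟩
    · rw [resLiabVec_succ, netWorthVec_succ, hR m le_rfl, hW m le_rfl, update_self,
        resLiabVec_succ, netWorthVec_succ]
      exact hnext

theorem exists_feasible_cost_add_le {F : ℕ → ℝ} {e u : ℕ → Fin n → ℝ} {η γ : ℝ}
    (hp : FeasiblePro T α pbar A e F p u) (hA : ∀ k j, 0 ≤ A k j) (hα : 1 ≤ α)
    (hpbar : 0 ≤ pbar) (he : ∀ s < T, ∀ i, 0 ≤ e s i) (hη0 : 0 ≤ η) (hη1 : η ≤ 1)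
    (hδ0 : ∀ s < T, 0 ≤ δ s) (hδr : ∀ s < T, δ s ≤ resLiabVec α pbar p s - p s)
    (hδw : ∀ s < T, δ s ≤ netWorthVec A (fun s i => e s i + u s i) p (s + 1)) :
    ∃ q, FeasiblePro T α pbar A e F q u ∧
      costPro T α η γ pbar q u + (1 - η) * ∑ s ∈ range T, ∑ j, δ s j
        ≤ costPro T α η γ pbar p u := by
  obtain ⟨q, hq, hqT⟩ := exists_dominating_process hA hα hpbar
    (fun s hs i => add_nonneg (he s hs i) ((hp s hs).2.1 i)) hδ0 hδr hδw
  refine ⟨q, fun s hs => ⟨(hq s hs).1, (hp s hs).2.1, (hq s hs).2.1, (hq s hs).2.2.1,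
    (hp s hs).2.2.2.2⟩, ?_⟩
  have hrun : ∑ s ∈ range T, ∑ j, (resLiabVec α pbar q s j - q s j)
      + ∑ s ∈ range T, ∑ j, δ s j
        ≤ ∑ s ∈ range T, ∑ j, (resLiabVec α pbar p s j - p s j) := by
    rw [← sum_add_distrib]
    refine sum_le_sum fun s hs => ?_
    rw [← sum_add_distrib]
    refine sum_le_sum fun j _ => ?_
    have := (hq s (mem_range.1 hs)).2.2.2 j
    simp only [Pi.sub_apply] at this
    linarith
  have hfinal : ∑ j, resLiabVec α pbar q T j ≤ ∑ j, resLiabVec α pbar p T j :=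
    sum_le_sum fun j _ => hqT j
  unfold costPro
  linarith [mul_le_mul_of_nonneg_left hrun (sub_nonneg.2 hη1),
    mul_le_mul_of_nonneg_left hfinal hη0]

end Evolution

end ProRata

theorem OptimalPro.payment_eq_resLiabVec_or_netWorthVec_eq_zero {n T : ℕ} {α η γ : ℝ}
    {pbar : Fin n → ℝ} {A : Matrix (Fin n) (Fin n) ℝ} {e : ℕ → Fin n → ℝ} {F : ℕ → ℝ}
    {p u : ℕ → Fin n → ℝ} (hopt : OptimalPro T α η γ pbar A e F p u)
    (hA : ∀ k j, 0 ≤ A k j) (hα : 1 ≤ α) (hpbar : 0 ≤ pbar) (he : ∀ s < T, ∀ i, 0 ≤ e s i)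
    (hη0 : 0 ≤ η) (hη1 : η < 1) {t : ℕ} (ht : t < T) (i : Fin n) :
    p t i = resLiabVec α pbar p t i
      ∨ netWorthVec A (fun s i => e s i + u s i) p (t + 1) i = 0 := by
  obtain ⟨hfeas, hmin⟩ := hopt
  by_contra! hslack
  set ε := min (resLiabVec α pbar p t i - p t i)
    (netWorthVec A (fun s i => e s i + u s i) p (t + 1) i)
  have hε : 0 < ε := lt_min (sub_pos.2 (((hfeas t ht).2.2.1 i).lt_of_ne hslack.1))
    (((hfeas t ht).2.2.2.1 i).lt_of_ne hslack.2.symm)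
  set δ : ℕ → Fin n → ℝ := fun s => Pi.single i (if s = t then ε else 0)
  have hδ : ∀ s, ∀ f : Fin n → ℝ, 0 ≤ f → (s = t → ε ≤ f i) → δ s ≤ f := fun s f hf hfi =>
    Pi.single_le_of_nonneg hf (by split_ifs with hs; exacts [hfi hs, hf i])
  obtain ⟨q, hq, hcost⟩ := ProRata.exists_feasible_cost_add_le (γ := γ) (δ := δ) hfeas hA hα
    hpbar he hη0 hη1.le (fun s _ => Pi.single_nonneg.2 (by split_ifs; exacts [hε.le, le_rfl]))
    (fun s hs => hδ s _ (fun j => sub_nonneg.2 ((hfeas s hs).2.2.1 j))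
      fun hst => hst ▸ min_le_left _ _)
    (fun s hs => hδ s _ (hfeas s hs).2.2.2.1 fun hst => hst ▸ min_le_right _ _)
  have hδsum : ∑ s ∈ range T, ∑ j, δ s j = ε := by simp [δ, ht]
  rw [hδsum] at hcost
  linarith [hmin q u hq, mul_pos (sub_pos.2 hη1) hε]

theorem stmt1_absolute_priority_prorata_general (n T : ℕ)
    (α : ℝ) (hα : 1 ≤ α)
    (Pbar : Matrix (Fin n) (Fin n) ℝ)
    (hPbar : ∀ i j, 0 ≤ Pbar i j) (hPdiag : ∀ i, Pbar i i = 0)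
    (pbar : Fin n → ℝ) (hpbar : ∀ i, pbar i = ∑ j, Pbar i j)
    (A : Matrix (Fin n) (Fin n) ℝ) (hA : A = proRata Pbar)
    (e : ℕ → Fin n → ℝ) (he : ∀ t, t < T → ∀ i, 0 ≤ e t i)
    (F : ℕ → ℝ)
    (η γ : ℝ) (hη0 : 0 ≤ η) (hη1 : η < 1)
    (pstar ustar : ℕ → Fin n → ℝ)
    (hopt : OptimalPro T α η γ pbar A e F pstar ustar) :
    ∀ i : Fin n, ∀ t, t < T →
      pstar t i =
        min (resLiabVec α pbar pstar t i)
          (netWorthVec A (fun s i => e s i + ustar s i) pstar t i + (e t i + ustar t i)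
            + ∑ j ∈ univ.erase i, A j i * pstar t j) := by
  intro i t ht
  subst hA
  have hfeas := hopt.1
  have hcash := hfeas.netWorthVec_succ_proRata hPbar hPdiag hpbar ht i
  have hR := (hfeas t ht).2.2.1 i
  have hW := (hfeas t ht).2.2.2.1 i
  refine le_antisymm (le_min hR (by linarith)) ?_
  rcases hopt.payment_eq_resLiabVec_or_netWorthVec_eq_zero (proRata_nonneg hPbar) hα
    (fun j => (hpbar j).symm ▸ sum_nonneg fun k _ => hPbar j k) he hη0 hη1 ht i with h | h
  · exact (min_le_left _ _).trans_eq h.symm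
  · exact (min_le_right _ _).trans (by linarith)

theorem stmt1_absolute_priority_prorata (n T : ℕ) (hn : 1 ≤ n) (hT : 1 ≤ T)
    (α : ℝ) (hα : 1 ≤ α)
    (Pbar : Matrix (Fin n) (Fin n) ℝ)
    (hPbar : ∀ i j, 0 ≤ Pbar i j) (hPdiag : ∀ i, Pbar i i = 0)
    (pbar : Fin n → ℝ) (hpbar : ∀ i, pbar i = ∑ j, Pbar i j)
    (A : Matrix (Fin n) (Fin n) ℝ) (hA : A = proRata Pbar)
    (e : ℕ → Fin n → ℝ) (he : ∀ t, t < T → ∀ i, 0 ≤ e t i)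
    (F : ℕ → ℝ) (hF : ∀ t, 0 ≤ F t) (hFmono : ∀ s t, s ≤ t → F s ≤ F t)
    (η γ : ℝ) (hη0 : 0 ≤ η) (hη1 : η < 1) (hγ : 0 < γ)
    (pstar ustar : ℕ → Fin n → ℝ)
    (hopt : OptimalPro T α η γ pbar A e F pstar ustar) :
    ∀ i : Fin n, ∀ t, t < T →
      pstar t i =
        min (resLiabVec α pbar pstar t i)
          (netWorthVec A (fun s i => e s i + ustar s i) pstar t i + (e t i + ustar t i)
            + ∑ j ∈ univ.erase i, A j i * pstar t j) :=
  stmt1_absolute_priority_prorata_general n T α hα Pbar hPbar hPdiag pbar hpbar A hA e he F η γ hη0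
    hη1 pstar ustar hopt
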